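/- arXiv:2602.05343 — 3 statements merged into one kernel-verified Lean document; each statement's English description precedes it below -/
import Mathlib

section
/- Let y : [0,1] → {−1, 1} be a piecewise constant function with exactly r sign changes on (0,1). If ∫₀¹ y(τ) τ^m dτ = 0 for all m = 0, 1, ..., K−1, then r ≥ K. -/
open MeasureTheory

/-- Sign-change lower bound: a piecewise constant function `y : [0,1] → {−1,1}`
with exactly `r` sign changes (alternating signs on consecutive subintervals of a
partition `0 = τ₀ < τ₁ < ⋯ < τ_r < τ_{r+1} = 1`) whose moments
`∫₀¹ y(τ) τ^m dτ` vanish for `m = 0, …, K−1` must satisfy `r ≥ K`. -/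
theorem sign_change_lower_bound
    (K r : ℕ) (hK : 1 ≤ K)
    (τ : ℕ → ℝ) (s : ℕ → ℝ) (y : ℝ → ℝ)
    (hτ0 : τ 0 = 0) (hτend : τ (r + 1) = 1)
    (hmono : StrictMonoOn τ (Set.Iic (r + 1)))
    (hs : ∀ k, k ≤ r → s k = 1 ∨ s k = -1)
    (halt : ∀ k, k < r → s (k + 1) = -s k)
    (hy : ∀ k, k ≤ r → ∀ x ∈ Set.Ioo (τ k) (τ (k + 1)), y x = s k)
    (hmom : ∀ m, m < K → ∫ t in (0:ℝ)..1, y t * t ^ m = 0) :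
    K ≤ r := by
  by_contra hlt
  push_neg at hlt
  -- adjacent inequalities
  have hadj : ∀ k, k ≤ r → τ k < τ (k + 1) := by
    intro k hk
    exact hmono (by simp [Set.mem_Iic]; omega) (by simp [Set.mem_Iic]; omega) (by omega)
  have hsk : ∀ k, k ≤ r → s k = (-1 : ℝ) ^ k * s 0 := by
    intro k
    induction k with
    | zero => intro _; simp
    | succ n ih =>
      intro hn
      rw [halt n (by omega), ih (by omega), pow_succ]
      ring
  have hs0 := hs 0 (Nat.zero_le _)
  have hs0sq : s 0 * s 0 = 1 := by rcases hs0 with h | h <;> rw [h] <;> norm_num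
  set g : ℝ → ℝ := fun t => ∏ j ∈ Finset.range r, (t - τ (j + 1)) with hg
  have hgc : Continuous g := by
    apply continuous_finset_prod
    intro j _
    exact continuous_id.sub continuous_const
  -- sign of g on each subinterval
  have hsign : ∀ k, k ≤ r → ∀ t ∈ Set.Ioo (τ k) (τ (k + 1)),
      0 < (-1 : ℝ) ^ (r - k) * g t := by
    intro k hk t ht
    have hsplit : g t = (∏ j ∈ Finset.range k, (t - τ (j + 1))) *
        ∏ j ∈ Finset.Ico k r, (t - τ (j + 1)) :=
      (Finset.prod_range_mul_prod_Ico _ hk).symm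
    have hA : 0 < ∏ j ∈ Finset.range k, (t - τ (j + 1)) := by
      apply Finset.prod_pos
      intro j hj
      have hj' : j + 1 ≤ k := Finset.mem_range.mp hj
      have hle : τ (j + 1) ≤ τ k := by
        rcases eq_or_lt_of_le hj' with h | h
        · rw [h]
        · exact le_of_lt (hmono (by simp [Set.mem_Iic]; omega) (by simp [Set.mem_Iic]; omega) h)
      linarith [ht.1]
    have hB : 0 < ∏ j ∈ Finset.Ico k r, (τ (j + 1) - t) := by
      apply Finset.prod_pos
      intro j hj
      have hj' := Finset.mem_Ico.mp hj
      have hle : τ (k + 1) ≤ τ (j + 1) := by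
        rcases eq_or_lt_of_le (by omega : k + 1 ≤ j + 1) with h | h
        · rw [h]
        · exact le_of_lt (hmono (by simp [Set.mem_Iic]; omega) (by simp [Set.mem_Iic]; omega) h)
      linarith [ht.2]
    have hC : ∏ j ∈ Finset.Ico k r, (t - τ (j + 1)) =
        (-1 : ℝ) ^ (r - k) * ∏ j ∈ Finset.Ico k r, (τ (j + 1) - t) := by
      rw [← Nat.card_Ico k r, ← Finset.prod_const, ← Finset.prod_mul_distrib]
      apply Finset.prod_congr rfl
      intro j _
      ring
    have hsq : (-1 : ℝ) ^ (r - k) * (-1 : ℝ) ^ (r - k) = 1 := by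
      rw [← pow_add]
      exact Even.neg_one_pow ⟨r - k, rfl⟩
    rw [hsplit, hC]
    have key : (-1 : ℝ) ^ (r - k) *
        ((∏ j ∈ Finset.range k, (t - τ (j + 1))) *
          ((-1 : ℝ) ^ (r - k) * ∏ j ∈ Finset.Ico k r, (τ (j + 1) - t))) =
        ((-1 : ℝ) ^ (r - k) * (-1 : ℝ) ^ (r - k)) *
          ((∏ j ∈ Finset.range k, (t - τ (j + 1))) *
            ∏ j ∈ Finset.Ico k r, (τ (j + 1) - t)) := by ring
    rw [key, hsq, one_mul]
    exact mul_pos hA hB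
  -- a.e. facts
  have hne : ∀ c : ℝ, ∀ᵐ x : ℝ, x ≠ c := by
    intro c
    have h1 : ({x : ℝ | ¬ x ≠ c}) = {c} := by ext x; simp
    rw [ae_iff, h1]
    exact measure_singleton c
  -- per-piece integrability
  have hpiece_int : ∀ (f : ℝ → ℝ), Continuous f → ∀ k, k ≤ r →
      IntervalIntegrable (fun t => y t * f t) volume (τ k) (τ (k + 1)) := by
    intro f hf k hk
    rw [intervalIntegrable_iff_integrableOn_Ioc_of_le (hadj k hk).le]
    have hfi : IntegrableOn (fun t => s k * f t) (Set.Ioc (τ k) (τ (k + 1))) volume :=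
      (continuous_const.mul hf).integrableOn_Ioc
    apply hfi.congr
    filter_upwards [ae_restrict_mem measurableSet_Ioc, ae_restrict_of_ae (hne (τ (k + 1)))]
      with x hx hxne
    rw [hy k hk x ⟨hx.1, lt_of_le_of_ne hx.2 hxne⟩]
  -- per-piece integral value
  have hpiece_val : ∀ (f : ℝ → ℝ), ∀ k, k ≤ r →
      (∫ t in (τ k)..(τ (k + 1)), y t * f t) = ∫ t in (τ k)..(τ (k + 1)), s k * f t := by
    intro f k hk
    apply intervalIntegral.integral_congr_ae
    filter_upwards [hne (τ (k + 1))] with x hxne hx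
    rw [Set.uIoc_of_le (hadj k hk).le] at hx
    rw [hy k hk x ⟨hx.1, lt_of_le_of_ne hx.2 hxne⟩]
  -- chained integrability
  have hchain : ∀ (f : ℝ → ℝ), Continuous f → ∀ n, n ≤ r + 1 →
      IntervalIntegrable (fun t => y t * f t) volume (τ 0) (τ n) := by
    intro f hf n
    induction n with
    | zero => intro _; simp [intervalIntegrable_iff]
    | succ n ih =>
      intro hn
      exact (ih (by omega)).trans (hpiece_int f hf n (by omega))
  -- polynomial expansion
  set P : Polynomial ℝ := ∏ j ∈ Finset.range r, (Polynomial.X - Polynomial.C (τ (j + 1)))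
    with hP
  have hPeval : ∀ t, P.eval t = g t := by
    intro t; simp [hP, hg, Polynomial.eval_prod]
  have hPdeg : P.natDegree < r + 1 := by
    have h := Polynomial.natDegree_prod_le (Finset.range r)
      (fun j => Polynomial.X - Polynomial.C (τ (j + 1)))
    rw [← hP] at h
    simp [Polynomial.natDegree_X_sub_C] at h
    omega
  have hI0 : (∫ t in (0:ℝ)..1, y t * g t) = 0 := by
    have hrw : (fun t => y t * g t) =
        fun t => ∑ m ∈ Finset.range (r + 1), y t * (P.coeff m * t ^ m) := by
      funext t
      rw [← hPeval, Polynomial.eval_eq_sum_range' hPdeg, Finset.mul_sum]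
    rw [hrw, intervalIntegral.integral_finset_sum]
    · apply Finset.sum_eq_zero
      intro m hm
      have hm' : m < K := by
        have := Finset.mem_range.mp hm; omega
      have h1 : (fun t : ℝ => y t * (P.coeff m * t ^ m)) =
          fun t => P.coeff m * (y t * t ^ m) := by funext t; ring
      rw [h1, intervalIntegral.integral_const_mul, hmom m hm', mul_zero]
    · intro m _
      have h2 := hchain (fun t => P.coeff m * t ^ m)
        (continuous_const.mul (continuous_pow m)) (r + 1) le_rfl
      rw [hτ0, hτend] at h2
      exact h2
  -- split into pieces
  have hsum : (∑ k ∈ Finset.range (r + 1), ∫ t in (τ k)..(τ (k + 1)), y t * g t) =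
      ∫ t in (0:ℝ)..1, y t * g t := by
    have h := intervalIntegral.sum_integral_adjacent_intervals
      (μ := volume) (f := fun t => y t * g t) (a := τ) (n := r + 1)
      (fun k hk => hpiece_int g hgc k (by omega))
    rw [hτ0, hτend] at h
    exact h
  set ε : ℝ := s 0 * (-1 : ℝ) ^ r with hε
  have hpos : ∀ k, k ≤ r → 0 < ε * ∫ t in (τ k)..(τ (k + 1)), y t * g t := by
    intro k hk
    rw [hpiece_val g k hk, ← intervalIntegral.integral_const_mul]
    apply intervalIntegral.intervalIntegral_pos_of_pos_on
    · exact ((continuous_const.mul (continuous_const.mul hgc)).intervalIntegrable _ _)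
    · intro x hx
      have h1 := hsign k hk x hx
      have e1 : ε * (s k * g x) = (s 0 * s 0) * (((-1 : ℝ) ^ r * (-1 : ℝ) ^ k) * g x) := by
        rw [hsk k hk, hε]; ring
      have e2 : (-1 : ℝ) ^ (r + k) = (-1 : ℝ) ^ (r - k) := by
        rw [show r + k = (r - k) + 2 * k by omega, pow_add, pow_mul]
        norm_num
      rw [e1, hs0sq, one_mul, ← pow_add, e2]
      exact h1
    · exact hadj k hk
  have htotal : 0 < ε * ∫ t in (0:ℝ)..1, y t * g t := by
    rw [← hsum, Finset.mul_sum]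
    apply Finset.sum_pos
    · intro k hk
      exact hpos k (by have := Finset.mem_range.mp hk; omega)
    · exact Finset.nonempty_range_iff.mpr (by omega)
  rw [hI0, mul_zero] at htotal
  exact lt_irrefl 0 htotal
end

section
/- Fix K ≥ 1 and a finite group G of n-qubit Paulis that is a decoupling group for H = H₀ + Σ_α σ_α ⊗ B_α, meaning every g ∈ G commutes with H₀ and (1/|G|) Σ_{g∈G} (g†⊗I) H_{SB} (g⊗I) = 0, where H_{SB} = Σ_α σ_α ⊗ B_α with distinct non-identity Pauli strings σ_α. Then there exist piecewise-constant functions y_α : [0,1] → {±1}, all constant on a common partition of [0,1] into at most (|G|−1)K + 1 subintervals, such that ∫₀¹ y_α(τ) τ^m dτ = 0 for every α and every m = 0, 1, ..., K−1. -/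
open Matrix Finset
open scoped Kronecker

/-- Existence of an order-`K` moment-cancelling switching schedule with at most
`(|G|−1)K` pulses (Theorem 1 of the paper). Let `G` be a decoupling group for
`H = H₀ + ∑_α σ_α ⊗ B_α`: every `g ∈ G` commutes with `H₀` and the group twirl of
`H_SB = ∑_α σ_α ⊗ B_α` vanishes; conjugation acts by signs,
`(U g)† σ_α (U g) = χ_α(g) σ_α`, and the interaction terms `σ_α ⊗ B_α` are
linearly independent (distinct non-identity Pauli strings with nonzero bath
operators). Assuming the continuous necklace-splitting theorem (as hypothesis
`hNeck`), there exist `±1`-valued functions `y_α`, all constant on a common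
partition of `[0,1]` into at most `(|G|−1)K + 1` subintervals (i.e. at most
`(|G|−1)K` interior breakpoints), whose generalized moments
`∫₀¹ y_α(τ) τ^m dτ` vanish for all `α` and all `m = 0, …, K−1`. -/
theorem exists_order_K_moment_cancelling_sequence
    (n d K : ℕ) (hK : 1 ≤ K)
    (G : Type*) [Fintype G] [Group G]
    (U : G → Matrix (Fin (2 ^ n)) (Fin (2 ^ n)) ℂ)
    (ι : Type*) [Fintype ι]
    (σ : ι → Matrix (Fin (2 ^ n)) (Fin (2 ^ n)) ℂ)
    (B : ι → Matrix (Fin d) (Fin d) ℂ)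
    (H0 : Matrix (Fin (2 ^ n) × Fin d) (Fin (2 ^ n) × Fin d) ℂ)
    (hcomm : ∀ g, Commute (U g ⊗ₖ (1 : Matrix (Fin d) (Fin d) ℂ)) H0)
    (χ : ι → G → ℂ) (hχpm : ∀ α g, χ α g = 1 ∨ χ α g = -1)
    (hconj : ∀ α g, (U g)ᴴ * σ α * U g = χ α g • σ α)
    (hindep : LinearIndependent ℂ fun α => σ α ⊗ₖ B α)
    (htwirl : ((Fintype.card G : ℂ))⁻¹ •
        ∑ g, ((U g)ᴴ ⊗ₖ (1 : Matrix (Fin d) (Fin d) ℂ)) *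
          (∑ α, σ α ⊗ₖ B α) * (U g ⊗ₖ (1 : Matrix (Fin d) (Fin d) ℂ)) = 0)
    (hNeck : ∀ (K' q : ℕ), 1 ≤ K' → 2 ≤ q →
      ∀ f : Fin K' → ℝ → ℝ,
        (∀ j, ContinuousOn (f j) (Set.Icc 0 1)) →
        (∀ j, ∀ x ∈ Set.Icc (0:ℝ) 1, 0 ≤ f j x) →
        ∃ L, L ≤ (q - 1) * K' ∧
          ∃ t : ℕ → ℝ, t 0 = 0 ∧ t (L + 1) = 1 ∧
            StrictMonoOn t (Set.Iic (L + 1)) ∧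
            ∃ bin : ℕ → Fin q, ∀ j : Fin K', ∀ c : Fin q,
              (∑ ℓ ∈ Finset.range (L + 1),
                  if bin ℓ = c then ∫ x in (t ℓ)..(t (ℓ + 1)), f j x else 0)
                = (1 / q) * ∫ x in (0:ℝ)..1, f j x) :
    ∃ L, L ≤ (Fintype.card G - 1) * K ∧
      ∃ t : ℕ → ℝ, t 0 = 0 ∧ t (L + 1) = 1 ∧ StrictMonoOn t (Set.Iic (L + 1)) ∧
        ∃ y : ι → ℝ → ℝ,
          (∀ α τ, y α τ = 1 ∨ y α τ = -1) ∧
          (∀ α ℓ, ℓ ≤ L → ∀ x ∈ Set.Ioo (t ℓ) (t (ℓ + 1)),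
            ∀ x' ∈ Set.Ioo (t ℓ) (t (ℓ + 1)), y α x = y α x') ∧
          (∀ α, ∀ m, m < K → ∫ τ in (0:ℝ)..1, y α τ * τ ^ m = 0) := by
  classical
  have hcardC : (Fintype.card G : ℂ) ≠ 0 := Nat.cast_ne_zero.2 Fintype.card_ne_zero
  -- character sums vanish
  have hkey : ∀ α, (∑ g, χ α g) = 0 := by
    have h0 : ∑ g, ((U g)ᴴ ⊗ₖ (1 : Matrix (Fin d) (Fin d) ℂ)) *
          (∑ α, σ α ⊗ₖ B α) * (U g ⊗ₖ (1 : Matrix (Fin d) (Fin d) ℂ)) = 0 := by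
      rcases smul_eq_zero.mp htwirl with h | h
      · exact absurd h (inv_ne_zero hcardC)
      · exact h
    have h1 : ∀ g : G, ((U g)ᴴ ⊗ₖ (1 : Matrix (Fin d) (Fin d) ℂ)) *
          (∑ α, σ α ⊗ₖ B α) * (U g ⊗ₖ (1 : Matrix (Fin d) (Fin d) ℂ))
        = ∑ α, χ α g • (σ α ⊗ₖ B α) := by
      intro g
      rw [Finset.mul_sum, Finset.sum_mul]
      refine Finset.sum_congr rfl fun α _ => ?_
      rw [← Matrix.mul_kronecker_mul, ← Matrix.mul_kronecker_mul, one_mul, mul_one,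
        hconj, Matrix.smul_kronecker]
    have h2 : ∑ α, (∑ g : G, χ α g) • (σ α ⊗ₖ B α) = 0 := by
      rw [← h0]
      rw [Finset.sum_congr rfl fun g _ => h1 g, Finset.sum_comm]
      refine Finset.sum_congr rfl fun α _ => ?_
      rw [Finset.sum_smul]
    exact fun α => Fintype.linearIndependent_iff.mp hindep _ h2 α
  rcases isEmpty_or_nonempty ι with hι | hι
  · -- trivial case: no interaction terms
    refine ⟨0, Nat.zero_le _, (fun ℓ => if ℓ = 0 then 0 else 1), by simp, by simp, ?_,
      fun _ _ => 1, fun α τ => Or.inl rfl, fun α => isEmptyElim α, fun α => isEmptyElim α⟩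
    intro a ha b hb hab
    simp only [Set.mem_Iic] at ha hb
    interval_cases a <;> interval_cases b <;> simp_all <;> norm_num
  · obtain ⟨α0⟩ := hι
    -- |G| ≥ 2
    have hq2 : 2 ≤ Fintype.card G := by
      by_contra h
      push_neg at h
      have h1 : Fintype.card G = 1 := by
        have := Fintype.card_pos (α := G); omega
      obtain ⟨x, hx⟩ := Fintype.card_eq_one_iff.mp h1
      have huniv : (Finset.univ : Finset G) = {x} := by
        ext y; simp [hx y]
      have := hkey α0
      rw [huniv, Finset.sum_singleton] at this
      rcases hχpm α0 x with h' | h' <;> rw [h'] at this <;> norm_num at this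
    obtain ⟨L, hL, t, ht0, ht1, htmono, bin, hbin⟩ :=
      hNeck K (Fintype.card G) hK hq2 (fun j x => x ^ (j : ℕ))
        (fun j => (continuous_pow _).continuousOn)
        (fun j x hx => pow_nonneg hx.1 _)
    refine ⟨L, hL, t, ht0, ht1, htmono, ?_⟩
    set e : Fin (Fintype.card G) ≃ G := (Fintype.equivFin G).symm with he
    set cval : ι → ℕ → ℝ := fun α ℓ => if χ α (e (bin ℓ)) = 1 then 1 else -1 with hcval
    set y : ι → ℝ → ℝ := fun α x =>
      if h : ∃ ℓ, ℓ ≤ L ∧ x ∈ Set.Ioc (t ℓ) (t (ℓ + 1)) then cval α (Nat.find h) else 1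
      with hy
    have hmono' : MonotoneOn t (Set.Iic (L + 1)) := htmono.monotoneOn
    have hle : ∀ ℓ, ℓ ≤ L → t ℓ ≤ t (ℓ + 1) := fun ℓ h =>
      le_of_lt (htmono (Set.mem_Iic.mpr (by omega)) (Set.mem_Iic.mpr (by omega)) (by omega))
    have huniq : ∀ a b : ℕ, a ≤ L → b ≤ L → ∀ x : ℝ,
        x ∈ Set.Ioc (t a) (t (a + 1)) → x ∈ Set.Ioc (t b) (t (b + 1)) → a = b := by
      intro a b ha hb x hxa hxb
      by_contra hne
      rcases Nat.lt_or_ge a b with h | h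
      · have h2 : t (a + 1) ≤ t b :=
          hmono' (Set.mem_Iic.mpr (by omega)) (Set.mem_Iic.mpr (by omega)) (by omega)
        have := hxb.1
        have := hxa.2
        linarith
      · have hba : b < a := by omega
        have h2 : t (b + 1) ≤ t a :=
          hmono' (Set.mem_Iic.mpr (by omega)) (Set.mem_Iic.mpr (by omega)) (by omega)
        have := hxa.1
        have := hxb.2
        linarith
    have hyc : ∀ α ℓ, ℓ ≤ L → ∀ x ∈ Set.Ioc (t ℓ) (t (ℓ + 1)), y α x = cval α ℓ := by
      intro α ℓ hℓ x hx
      have hex : ∃ k, k ≤ L ∧ x ∈ Set.Ioc (t k) (t (k + 1)) := ⟨ℓ, hℓ, hx⟩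
      rw [hy]
      simp only [dif_pos hex]
      obtain ⟨h1, h2⟩ := Nat.find_spec hex
      rw [huniq _ _ h1 hℓ x h2 hx]
    refine ⟨y, ?_, ?_, ?_⟩
    · intro α τ
      rw [hy]
      dsimp only
      split
      · rw [hcval]; dsimp only; split
        · exact Or.inl rfl
        · exact Or.inr rfl
      · exact Or.inl rfl
    · intro α ℓ hℓ x hx x' hx'
      rw [hyc α ℓ hℓ x (Set.Ioo_subset_Ioc_self hx),
        hyc α ℓ hℓ x' (Set.Ioo_subset_Ioc_self hx')]
    · intro α m hm
      have hsumR : (∑ g : G, (if χ α g = 1 then (1:ℝ) else -1)) = 0 := by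
        have hc : ((∑ g : G, (if χ α g = 1 then (1:ℝ) else -1) : ℝ) : ℂ) = ∑ g, χ α g := by
          push_cast
          refine Finset.sum_congr rfl fun g _ => ?_
          rcases hχpm α g with h | h <;> rw [h] <;> norm_num
        rw [hkey α] at hc
        exact_mod_cast hc
      have hint : ∀ ℓ, ℓ < L + 1 →
          IntervalIntegrable (fun τ => y α τ * τ ^ m) MeasureTheory.volume (t ℓ) (t (ℓ + 1)) := by
        intro ℓ hℓ
        have h1 : IntervalIntegrable (fun τ : ℝ => cval α ℓ * τ ^ m)
            MeasureTheory.volume (t ℓ) (t (ℓ + 1)) :=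
          (Continuous.intervalIntegrable (continuous_const.mul (continuous_pow m)) _ _)
        rw [intervalIntegrable_iff_integrableOn_Ioc_of_le (hle ℓ (by omega))] at h1 ⊢
        exact h1.congr_fun (fun x hx => by rw [hyc α ℓ (by omega) x hx]) measurableSet_Ioc
      have hsplit : ∫ τ in (0:ℝ)..1, y α τ * τ ^ m
          = ∑ ℓ ∈ Finset.range (L + 1), ∫ τ in (t ℓ)..(t (ℓ + 1)), y α τ * τ ^ m := by
        have := intervalIntegral.sum_integral_adjacent_intervals hint
        rw [ht0, ht1] at this
        exact this.symm
      have hpiece : ∀ ℓ, ℓ ≤ L → ∫ τ in (t ℓ)..(t (ℓ + 1)), y α τ * τ ^ m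
          = cval α ℓ * ∫ τ in (t ℓ)..(t (ℓ + 1)), τ ^ m := by
        intro ℓ hℓ
        rw [intervalIntegral.integral_of_le (hle ℓ hℓ),
          intervalIntegral.integral_of_le (hle ℓ hℓ),
          MeasureTheory.setIntegral_congr_fun measurableSet_Ioc
            (g := fun τ => cval α ℓ * τ ^ m) (fun x hx => by rw [hyc α ℓ hℓ x hx]),
          MeasureTheory.integral_const_mul]
      have hb := hbin ⟨m, hm⟩
      simp only [Fin.val_mk] at hb
      rw [hsplit, Finset.sum_congr rfl fun ℓ hℓ => hpiece ℓ (by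
        simpa using Nat.lt_succ_iff.mp (Finset.mem_range.mp hℓ))]
      calc ∑ ℓ ∈ Finset.range (L + 1), cval α ℓ * ∫ τ in (t ℓ)..(t (ℓ + 1)), τ ^ m
          = ∑ ℓ ∈ Finset.range (L + 1), ∑ cc : Fin (Fintype.card G),
              if bin ℓ = cc then (if χ α (e cc) = 1 then (1:ℝ) else -1)
                * ∫ τ in (t ℓ)..(t (ℓ + 1)), τ ^ m else 0 := by
            refine Finset.sum_congr rfl fun ℓ _ => ?_
            rw [Finset.sum_ite_eq]
            simp [hcval]
        _ = ∑ cc : Fin (Fintype.card G), (if χ α (e cc) = 1 then (1:ℝ) else -1)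
              * ∑ ℓ ∈ Finset.range (L + 1),
                  if bin ℓ = cc then ∫ τ in (t ℓ)..(t (ℓ + 1)), τ ^ m else 0 := by
            rw [Finset.sum_comm]
            refine Finset.sum_congr rfl fun cc _ => ?_
            rw [Finset.mul_sum]
            refine Finset.sum_congr rfl fun ℓ _ => ?_
            rw [mul_ite, mul_zero]
        _ = ∑ cc : Fin (Fintype.card G), (if χ α (e cc) = 1 then (1:ℝ) else -1)
              * ((1 / (Fintype.card G : ℝ)) * ∫ x in (0:ℝ)..1, x ^ m) := by
            refine Finset.sum_congr rfl fun cc _ => ?_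
            rw [hb cc]
        _ = (∑ cc : Fin (Fintype.card G), (if χ α (e cc) = 1 then (1:ℝ) else -1))
              * ((1 / (Fintype.card G : ℝ)) * ∫ x in (0:ℝ)..1, x ^ m) := by
            rw [Finset.sum_mul]
        _ = 0 := by
            rw [Equiv.sum_comp e (fun g => if χ α g = 1 then (1:ℝ) else -1), hsumR, zero_mul]
end

section
/- Let β : [0,T] → ℝ be K-times continuously differentiable with |β^{(K)}(t)| ≤ B_K for all t ∈ [0,T], and let y : [0,1] → {±1} be a step function satisfying ∫₀¹ y(τ) τ^m dτ = 0 for all m = 0, ..., K−1. Then |∫₀ᵀ y(t/T) β(t) dt| ≤ B_K T^{K+1} / K!. -/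
open MeasureTheory


/-- Taylor-remainder bound for moment-cancelling switching functions: if `β` is
`K`-times continuously differentiable on `[0,T]` with `|β^{(K)}| ≤ B` there, and
`y` is a `±1`-valued step function (constant on the subintervals of a partition
`0 = t₀ < ⋯ < t_{L+1} = 1`) whose moments `∫₀¹ y(τ) τ^m dτ` vanish for all
`m = 0, …, K−1`, then `|∫₀ᵀ y(t/T) β(t) dt| ≤ B T^{K+1} / K!`. -/
theorem moment_cancellation_taylor_bound
    (K L : ℕ) (hK : 1 ≤ K) (T B : ℝ) (hT : 0 < T) (hB : 0 ≤ B)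
    (β : ℝ → ℝ)
    (hβ : ContDiffOn ℝ K β (Set.Icc 0 T))
    (hβK : ∀ t ∈ Set.Icc (0:ℝ) T, |iteratedDerivWithin K β (Set.Icc 0 T) t| ≤ B)
    (t : ℕ → ℝ) (s : ℕ → ℝ) (y : ℝ → ℝ)
    (ht0 : t 0 = 0) (htL : t (L + 1) = 1)
    (hmono : StrictMonoOn t (Set.Iic (L + 1)))
    (hs : ∀ ℓ, ℓ ≤ L → s ℓ = 1 ∨ s ℓ = -1)
    (hy : ∀ ℓ, ℓ ≤ L → ∀ x ∈ Set.Ico (t ℓ) (t (ℓ + 1)), y x = s ℓ)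
    (hmom : ∀ m, m < K → ∫ τ in (0:ℝ)..1, y τ * τ ^ m = 0) :
    |∫ x in (0:ℝ)..T, y (x / T) * β x| ≤ B * T ^ (K + 1) / K.factorial := by
  classical
  obtain ⟨n, rfl⟩ : ∃ n, K = n + 1 := ⟨K - 1, (Nat.succ_pred_eq_of_pos hK).symm⟩
  set z : ℝ → ℝ := fun τ => ∑ ℓ ∈ Finset.range (L + 1),
      Set.indicator (Set.Ico (t ℓ) (t (ℓ + 1))) (fun _ => s ℓ) τ with hzdef
  have hmonot : MonotoneOn t (Set.Iic (L + 1)) := hmono.monotoneOn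
  -- value of z on each subinterval
  have hzval : ∀ ℓ, ℓ ≤ L → ∀ τ ∈ Set.Ico (t ℓ) (t (ℓ + 1)), z τ = s ℓ := by
    intro ℓ hℓ τ hτ
    rw [hzdef]
    refine (Finset.sum_eq_single ℓ ?_ ?_).trans (Set.indicator_of_mem hτ _)
    · intro j hj hjℓ
      have hjL : j < L + 1 := Finset.mem_range.mp hj
      apply Set.indicator_of_notMem
      intro hτj
      rcases lt_or_gt_of_ne hjℓ with h | h
      · have hle : t (j + 1) ≤ t ℓ :=
          hmonot (by simp only [Set.mem_Iic]; omega) (by simp only [Set.mem_Iic]; omega)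
            (by omega)
        exact absurd (lt_of_lt_of_le hτj.2 (hle.trans hτ.1)) (lt_irrefl τ)
      · have hle : t (ℓ + 1) ≤ t j :=
          hmonot (by simp only [Set.mem_Iic]; omega) (by simp only [Set.mem_Iic]; omega)
            (by omega)
        exact absurd (lt_of_lt_of_le hτ.2 (hle.trans hτj.1)) (lt_irrefl τ)
    · intro h; exact absurd (Finset.mem_range.mpr (by omega)) h
  -- coverage of [0,1)
  have hcov : ∀ τ ∈ Set.Ico (0:ℝ) 1, ∃ ℓ, ℓ ≤ L ∧ τ ∈ Set.Ico (t ℓ) (t (ℓ + 1)) := by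
    intro τ hτ
    set ℓ := Nat.findGreatest (fun i => t i ≤ τ) L with hℓdef
    have hℓL : ℓ ≤ L := Nat.findGreatest_le L
    have h1 : t ℓ ≤ τ := Nat.findGreatest_spec (P := fun i => t i ≤ τ) (Nat.zero_le L)
      (show t 0 ≤ τ by rw [ht0]; exact hτ.1)
    refine ⟨ℓ, hℓL, h1, ?_⟩
    rcases eq_or_lt_of_le hℓL with h | h
    · rw [h, htL]; exact hτ.2
    · have := Nat.findGreatest_is_greatest (P := fun i => t i ≤ τ)
        (by omega : Nat.findGreatest (fun i => t i ≤ τ) L < ℓ + 1) (by omega)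
      exact not_le.mp this
  have hz_eq : ∀ τ ∈ Set.Ico (0:ℝ) 1, z τ = y τ := by
    intro τ hτ
    obtain ⟨ℓ, hℓ, hτℓ⟩ := hcov τ hτ
    rw [hzval ℓ hℓ τ hτℓ, hy ℓ hℓ τ hτℓ]
  have hz_bd : ∀ τ, |z τ| ≤ 1 := by
    intro τ
    by_cases h : ∃ ℓ, ℓ ≤ L ∧ τ ∈ Set.Ico (t ℓ) (t (ℓ + 1))
    · obtain ⟨ℓ, hℓ, hτ⟩ := h
      rw [hzval ℓ hℓ τ hτ]
      rcases hs ℓ hℓ with h | h <;> rw [h] <;> norm_num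
    · push_neg at h
      have hz0 : z τ = 0 := by
        rw [hzdef]
        apply Finset.sum_eq_zero
        intro j hj
        exact Set.indicator_of_notMem (h j (Nat.lt_succ_iff.mp (Finset.mem_range.mp hj))) _
      simp [hz0]
  have hz_meas : Measurable z := by
    rw [hzdef]
    exact Finset.measurable_sum _ fun ℓ _ => measurable_const.indicator measurableSet_Ico
  -- replace y by z in all integrals
  have hIyz : (∫ x in (0:ℝ)..T, y (x / T) * β x) = ∫ x in (0:ℝ)..T, z (x / T) * β x := by
    apply intervalIntegral.integral_congr_ae
    have hne : ∀ᵐ x : ℝ, x ∉ ({T} : Set ℝ) := (Set.countable_singleton T).ae_notMem volume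
    filter_upwards [hne] with x hx hxI
    rw [Set.uIoc_of_le hT.le] at hxI
    have hx' : x / T ∈ Set.Ico (0:ℝ) 1 :=
      ⟨div_nonneg hxI.1.le hT.le,
        (div_lt_one hT).mpr (lt_of_le_of_ne hxI.2 (by simpa using hx))⟩
    rw [← hz_eq (x / T) hx']
  have hmom' : ∀ m, m < n + 1 → (∫ τ in (0:ℝ)..1, z τ * τ ^ m) = 0 := by
    intro m hm
    have heq : (∫ τ in (0:ℝ)..1, z τ * τ ^ m) = ∫ τ in (0:ℝ)..1, y τ * τ ^ m := by
      apply intervalIntegral.integral_congr_ae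
      have hne : ∀ᵐ τ : ℝ, τ ∉ ({1} : Set ℝ) := (Set.countable_singleton 1).ae_notMem volume
      filter_upwards [hne] with τ h1 hτI
      rw [Set.uIoc_of_le (by norm_num : (0:ℝ) ≤ 1)] at hτI
      rw [hz_eq τ ⟨hτI.1.le, lt_of_le_of_ne hτI.2 (by simpa using h1)⟩]
    rw [heq]
    exact hmom m hm
  -- integrability helper
  have hint : ∀ f : ℝ → ℝ, ContinuousOn f (Set.Icc 0 T) →
      IntervalIntegrable (fun x => z (x / T) * f x) MeasureTheory.volume 0 T := by
    intro f hf
    obtain ⟨C, hC⟩ := (isCompact_Icc (a := (0:ℝ)) (b := T)).exists_bound_of_continuousOn hf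
    rw [intervalIntegrable_iff_integrableOn_Ioc_of_le hT.le]
    have hmeas : MeasureTheory.AEStronglyMeasurable (fun x => z (x / T) * f x)
        (MeasureTheory.volume.restrict (Set.Ioc 0 T)) := by
      exact ((hz_meas.comp (measurable_id.div_const T)).aestronglyMeasurable.restrict).mul
        ((hf.mono Set.Ioc_subset_Icc_self).aestronglyMeasurable measurableSet_Ioc)
    refine (MeasureTheory.integrable_const C).mono' hmeas ?_
    rw [MeasureTheory.ae_restrict_iff' measurableSet_Ioc]
    refine Filter.Eventually.of_forall fun x hx => ?_
    have hxI : x ∈ Set.Icc (0:ℝ) T := Set.Ioc_subset_Icc_self hx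
    calc ‖z (x / T) * f x‖ = |z (x / T)| * |f x| := abs_mul _ _
      _ ≤ 1 * C := by
          refine mul_le_mul (hz_bd _) ?_ (abs_nonneg _) zero_le_one
          simpa using hC x hxI
      _ = C := one_mul C
  -- Taylor polynomial
  set P : ℝ → ℝ := fun x => taylorWithinEval β n (Set.Icc 0 T) 0 x with hPdef
  have hcast : ContDiffOn ℝ ((n : ℕ∞) + 1) β (Set.Icc 0 T) := by exact_mod_cast hβ
  have hrem : ∀ x ∈ Set.Icc (0:ℝ) T, |β x - P x| ≤ B * x ^ (n + 1) / n.factorial := by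
    intro x hx
    have := taylor_mean_remainder_bound (f := β) (a := 0) (b := T) (C := B) (n := n)
      hT.le hcast hx (fun u hu => by rw [Real.norm_eq_abs]; exact hβK u hu)
    simpa [hPdef] using this
  have hPcont : Continuous P := by
    rw [hPdef]
    simp only [taylor_within_apply]
    exact continuous_finset_sum _ fun k _ =>
      (Continuous.smul (continuous_const.mul ((continuous_id.sub continuous_const).pow k))
        continuous_const)
  -- each monomial integral vanishes
  have hmonk : ∀ k, k < n + 1 → (∫ x in (0:ℝ)..T, z (x / T) * x ^ k) = 0 := by
    intro k hk
    have key : (∫ x in (0:ℝ)..T, z (x / T) * x ^ k)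
        = ∫ x in (0:ℝ)..T, (fun τ => z τ * (T * τ) ^ k) (x / T) := by
      apply intervalIntegral.integral_congr
      intro x _
      simp only
      have hxx : T * (x / T) = x := by field_simp
      rw [hxx]
    rw [key, intervalIntegral.integral_comp_div (c := T) (f := fun τ => z τ * (T * τ) ^ k)
      hT.ne']
    have h2 : (∫ τ in (0:ℝ) / T..T / T, z τ * (T * τ) ^ k)
        = T ^ k * ∫ τ in (0:ℝ)..1, z τ * τ ^ k := by
      rw [zero_div, div_self hT.ne', ← intervalIntegral.integral_const_mul]
      apply intervalIntegral.integral_congr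
      intro τ _
      ring
    rw [h2, hmom' k hk, mul_zero, smul_zero]
  -- polynomial part vanishes
  have hpoly : (∫ x in (0:ℝ)..T, z (x / T) * P x) = 0 := by
    have hrepr : (fun x => z (x / T) * P x) = fun x => ∑ k ∈ Finset.range (n + 1),
        ((k.factorial : ℝ)⁻¹ * iteratedDerivWithin k β (Set.Icc 0 T) 0) *
          (z (x / T) * x ^ k) := by
      funext x
      rw [hPdef]
      simp only [taylor_within_apply, Finset.mul_sum]
      apply Finset.sum_congr rfl
      intro k _
      simp only [smul_eq_mul, sub_zero]
      ring
    rw [hrepr, intervalIntegral.integral_finset_sum]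
    · apply Finset.sum_eq_zero
      intro k hk
      rw [intervalIntegral.integral_const_mul, hmonk k (Finset.mem_range.mp hk), mul_zero]
    · intro k _
      exact (hint (fun x => x ^ k) (continuous_pow k).continuousOn).const_mul _
  -- split the integral
  have hsplit : (∫ x in (0:ℝ)..T, z (x / T) * β x)
      = (∫ x in (0:ℝ)..T, z (x / T) * (β x - P x)) + ∫ x in (0:ℝ)..T, z (x / T) * P x := by
    rw [← intervalIntegral.integral_add
      (hint (fun x => β x - P x) (hβ.continuousOn.sub hPcont.continuousOn)) (hint _ hPcont.continuousOn)]
    apply intervalIntegral.integral_congr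
    intro x _
    ring
  rw [hIyz, hsplit, hpoly, add_zero]
  -- bound the remainder integral
  have habs : |∫ x in (0:ℝ)..T, z (x / T) * (β x - P x)|
      ≤ |∫ x in (0:ℝ)..T, B * x ^ (n + 1) / n.factorial| := by
    rw [← Real.norm_eq_abs]
    apply intervalIntegral.norm_integral_le_abs_of_norm_le
    · rw [MeasureTheory.ae_restrict_iff' measurableSet_uIoc]
      refine Filter.Eventually.of_forall fun x hx => ?_
      rw [Set.uIoc_of_le hT.le] at hx
      have hxI : x ∈ Set.Icc (0:ℝ) T := Set.Ioc_subset_Icc_self hx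
      calc ‖z (x / T) * (β x - P x)‖ = |z (x / T)| * |β x - P x| := abs_mul _ _
        _ ≤ 1 * (B * x ^ (n + 1) / n.factorial) :=
            mul_le_mul (hz_bd _) (hrem x hxI) (abs_nonneg _) zero_le_one
        _ = B * x ^ (n + 1) / n.factorial := one_mul _
    · apply Continuous.intervalIntegrable
      fun_prop
  refine habs.trans ?_
  have hcomp : (∫ x in (0:ℝ)..T, B * x ^ (n + 1) / n.factorial)
      = B * T ^ (n + 1 + 1) / (((n : ℝ) + 2) * n.factorial) := by
    have hre : (fun x : ℝ => B * x ^ (n + 1) / n.factorial)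
        = fun x : ℝ => (B / n.factorial) * x ^ (n + 1) := by
      funext x; ring
    rw [hre, intervalIntegral.integral_const_mul, integral_pow]
    have hnf : (n.factorial : ℝ) ≠ 0 := Nat.cast_ne_zero.mpr n.factorial_ne_zero
    rw [zero_pow (by omega : n + 1 + 1 ≠ 0), sub_zero]
    push_cast
    rw [div_mul_div_comm]
    congr 1
    ring
  rw [hcomp, abs_of_nonneg (by positivity)]
  have hfact : ((n + 1).factorial : ℝ) ≤ ((n : ℝ) + 2) * n.factorial := by
    rw [Nat.factorial_succ]
    push_cast
    have h0 : (0:ℝ) ≤ (n.factorial : ℝ) := by positivity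
    nlinarith
  gcongr
end
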